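/- For the complete graph K_n without loops (n ≥ 2): st_+(K_n) = 3i if 2·3^{i−1} < n ≤ 3^i, st_+(K_n) = 3i+1 if 3^i < n ≤ 4·3^{i−1}, and st_+(K_n) = 3i+2 if 4·3^{i−1} < n ≤ 2·3^i. -/

import Mathlib

/-!
Let `𝒞` be a set-join cover of `Kₙ` with component set `C`, and let `H` be the graph on `C`
whose edges are the joins of `𝒞`. Since `Kₙ` has no loops, the components containing a vertex
`v` form an independent set `S v` of `H`, and since every two distinct vertices are joined,
there is an edge of `H` between `S u` and `S v` for `u ≠ v`. Extending the `S v` to maximal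
independent sets therefore gives `n` distinct ones, and the Moon–Moser bound yields
`n ≤ moonMoser |C|`. Conversely, if `n ≤ ∏ kⱼ`, coding the vertices by words in `∏ Fin kⱼ` and
joining, for each coordinate, all pairs of distinct fibres gives a cover of order `∑ kⱼ`; as
`moonMoser m` is a product of 2s, 3s and 4s summing to at most `m`, `st₊(Kₙ)` is the least `m`
with `n ≤ moonMoser m`.
-/

open Matrix

/-- A finite simple undirected graph that allows loops: a symmetric adjacency
relation on the vertex type. -/
structure LGraph (V : Type*) where
  /-- the adjacency relation; `Adj v v` means a loop at `v`. -/
  Adj : V → V → Prop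
  /-- adjacency is symmetric -/
  symm : ∀ {u v : V}, Adj u v → Adj v u

namespace LGraph

variable {V W : Type*}

/-- `𝒞` is a set-join cover of `G`: all components are nonempty subsets of the
vertex set, and the union of the edge sets of the set-joins `K ∨ L` in `𝒞` is
exactly the edge set of `G`. A set-join is represented as an unordered pair
`s(K, L)` of subsets of the vertex set. -/
def IsSetJoinCover (G : LGraph V) (𝒞 : Set (Sym2 (Set V))) : Prop :=
  (∀ p ∈ 𝒞, ∀ K ∈ p, (K : Set V).Nonempty) ∧
    ∀ u v : V, G.Adj u v ↔ ∃ p ∈ 𝒞, ∃ K L : Set V, p = s(K, L) ∧ u ∈ K ∧ v ∈ L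

/-- The component set `V(𝒞)` of a set-join cover: all subsets of the vertex set
appearing as a component of some set-join in `𝒞`. -/
def comps (𝒞 : Set (Sym2 (Set V))) : Set (Set V) :=
  {K : Set V | ∃ p ∈ 𝒞, K ∈ p}

/-- The order `|𝒞|` of a set-join cover: the number of its components. -/
noncomputable def coverOrder (𝒞 : Set (Sym2 (Set V))) : ℕ :=
  (comps 𝒞).ncard

/-- The SNT-rank `st₊(G)` of a graph: the minimal order of a set-join cover of `G`. -/
noncomputable def st (G : LGraph V) : ℕ :=
  sInf {k : ℕ | ∃ 𝒞 : Set (Sym2 (Set V)), G.IsSetJoinCover 𝒞 ∧ coverOrder 𝒞 = k}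

/-- An optimal set-join cover (OSJ cover): a set-join cover of order `st₊(G)`. -/
def IsOptimalCover (G : LGraph V) (𝒞 : Set (Sym2 (Set V))) : Prop :=
  G.IsSetJoinCover 𝒞 ∧ coverOrder 𝒞 = G.st

/-- The graph `G(𝒞)` of a set-join cover: vertices are the components, and two
components `K`, `L` are adjacent iff the set-join `K ∨ L` belongs to `𝒞`. -/
def coverGraph (𝒞 : Set (Sym2 (Set V))) : LGraph (comps 𝒞) where
  Adj K L := s((K : Set V), (L : Set V)) ∈ 𝒞
  symm := by
    intro K L h
    rwa [Sym2.eq_swap] at h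

/-- The neighbourhood of a vertex (`v ∈ neighborSet v` iff `v` has a loop). -/
def neighborSet (G : LGraph V) (v : V) : Set V := {w | G.Adj v w}

/-- The induced subgraph on a set of vertices. -/
def induce (G : LGraph V) (S : Set V) : LGraph S where
  Adj a b := G.Adj (a : V) (b : V)
  symm := by intro a b h; exact G.symm h

/-- Adjacency for the disjoint union of two graphs. -/
def disjUnionAdj (G : LGraph V) (H : LGraph W) : V ⊕ W → V ⊕ W → Prop
  | Sum.inl a, Sum.inl b => G.Adj a b
  | Sum.inr a, Sum.inr b => H.Adj a b
  | _, _ => False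

/-- The disjoint union `G ∪ H` of two graphs. -/
def disjUnion (G : LGraph V) (H : LGraph W) : LGraph (V ⊕ W) where
  Adj := disjUnionAdj G H
  symm := by
    rintro (a | a) (b | b) h
    · exact G.symm h
    · exact h.elim
    · exact h.elim
    · exact H.symm h

/-- The graph with no edges on vertex type `V`. -/
def emptyGraph (V : Type*) : LGraph V where
  Adj _ _ := False
  symm := by intro u v h; exact h

/-- Adjacency for the join of a graph with a single looped vertex `none`. -/
def joinK1ℓAdj (G : LGraph V) : Option V → Option V → Prop
  | some a, some b => G.Adj a b
  | _, _ => True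

/-- The join `G ∨ K₁ˡ` of `G` with a single looped vertex (the vertex `none`). -/
def joinK1ℓ (G : LGraph V) : LGraph (Option V) where
  Adj := joinK1ℓAdj G
  symm := by
    rintro (_ | a) (_ | b) h
    · trivial
    · trivial
    · trivial
    · exact G.symm h

/-- The complete loopless graph `Kₙ` on `Fin n`. -/
def completeGraph (n : ℕ) : LGraph (Fin n) where
  Adj i j := i ≠ j
  symm := by intro i j h; exact h.symm

/-- The path `Pₙ` on `n` vertices (no loops). -/
def pathGraph (n : ℕ) : LGraph (Fin n) where
  Adj i j := (i : ℕ) + 1 = (j : ℕ) ∨ (j : ℕ) + 1 = (i : ℕ)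
  symm := by intro i j h; exact h.symm

/-- The cycle `Cₙ` on `n` vertices (no loops), for `n ≥ 3`. -/
def cycleGraph (n : ℕ) : LGraph (Fin n) where
  Adj i j := ((i : ℕ) + 1) % n = (j : ℕ) ∨ ((j : ℕ) + 1) % n = (i : ℕ)
  symm := by intro i j h; exact h.symm

/-- Adjacency for the generalised star: the centre is `none`, and `some ⟨i, j⟩`
is the vertex at distance `j + 1` from the centre on arm `i`. -/
def genStarAdj (t : ℕ) (k : Fin t → ℕ) :
    Option ((i : Fin t) × Fin (k i)) → Option ((i : Fin t) × Fin (k i)) → Prop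
  | none, none => False
  | none, some ⟨_, j⟩ => (j : ℕ) = 0
  | some ⟨_, j⟩, none => (j : ℕ) = 0
  | some ⟨i, j⟩, some ⟨i', j'⟩ => i = i' ∧ ((j : ℕ) + 1 = (j' : ℕ) ∨ (j' : ℕ) + 1 = (j : ℕ))

/-- The generalised star `star(k₁, …, k_t)` with central vertex `none` and `t`
arms, the `i`-th arm being a path with `k i` edges emanating from the centre. -/
def genStar (t : ℕ) (k : Fin t → ℕ) : LGraph (Option ((i : Fin t) × Fin (k i))) where
  Adj := genStarAdj t k
  symm := by
    rintro (_ | ⟨i, j⟩) (_ | ⟨i', j'⟩) h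
    · exact h.elim
    · exact h
    · exact h
    · exact ⟨h.1.symm, h.2.symm⟩

/-- A loopless leaf: a vertex with exactly one neighbour and no loop. -/
def LooplessLeaf (G : LGraph V) (v : V) : Prop :=
  ¬ G.Adj v v ∧ ∃ w : V, G.neighborSet v = {w}

/-- Delete from `G` all edges incident to the vertex `w`. -/
def deleteVertexEdges (G : LGraph V) (w : V) : LGraph V where
  Adj u v := G.Adj u v ∧ u ≠ w ∧ v ≠ w
  symm := by intro u v h; exact ⟨G.symm h.1, h.2.2, h.2.1⟩

/-- A graph is twin-free if no two distinct vertices have the same neighbourhood. -/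
def TwinFree (G : LGraph V) : Prop :=
  ∀ u v : V, G.neighborSet u = G.neighborSet v → u = v

/-- `G` has a unique optimal set-join cover. -/
def HasUniqueOptimalCover (G : LGraph V) : Prop :=
  ∃! 𝒞 : Set (Sym2 (Set V)), G.IsSetJoinCover 𝒞 ∧ coverOrder 𝒞 = G.st

/-- The cover graphs of two set-join covers are isomorphic. -/
def CoverGraphIso (𝒞 : Set (Sym2 (Set V))) (𝒟 : Set (Sym2 (Set W))) : Prop :=
  ∃ e : comps 𝒞 ≃ comps 𝒟,
    ∀ K L : comps 𝒞, (coverGraph 𝒞).Adj K L ↔ (coverGraph 𝒟).Adj (e K) (e L)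

/-- All optimal set-join covers of `G` have isomorphic cover graphs. -/
def HasUniqueOSJCoverGraph (G : LGraph V) : Prop :=
  ∀ 𝒞 𝒟 : Set (Sym2 (Set V)),
    G.IsOptimalCover 𝒞 → G.IsOptimalCover 𝒟 → CoverGraphIso 𝒞 𝒟

/-- Entrywise nonnegativity of a real matrix. -/
def EntrywiseNonneg {m n : Type*} (A : Matrix m n ℝ) : Prop :=
  ∀ i j, 0 ≤ A i j

/-- The SNT-rank `st₊(A)` of a matrix: the minimal `k` such that `A = B * C * Bᵀ`
with `B` an entrywise nonnegative `n × k` matrix and `C` a symmetric entrywise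
nonnegative `k × k` matrix. -/
noncomputable def stM {V : Type*} [Fintype V] (A : Matrix V V ℝ) : ℕ :=
  sInf {k : ℕ | ∃ B : Matrix V (Fin k) ℝ, ∃ C : Matrix (Fin k) (Fin k) ℝ,
    EntrywiseNonneg B ∧ C.IsSymm ∧ EntrywiseNonneg C ∧ A = B * C * Bᵀ}

/-- The SNT-rank `st₊(G)` of a graph defined via matrices: the minimum of
`st₊(A)` over all symmetric entrywise nonnegative matrices `A` whose pattern
graph is `G`. -/
noncomputable def stMGraph {V : Type*} [Fintype V] (G : LGraph V) : ℕ :=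
  sInf {k : ℕ | ∃ A : Matrix V V ℝ, A.IsSymm ∧ EntrywiseNonneg A ∧
    (∀ i j, G.Adj i j ↔ 0 < A i j) ∧ stM A = k}

/-- The loopy graph associated with a simple graph. -/
def _root_.SimpleGraph.toLGraph (G : SimpleGraph V) : LGraph V where
  Adj := G.Adj
  symm := by intro u v h; exact G.adj_symm h

/-- The edge star cover number `starc(G)` of a loopless simple graph: the minimal
number of stars (given by a centre and a nonempty set of leaves not containing
the centre) whose edge sets have union exactly `E(G)`. -/
noncomputable def starCoverNumber (G : SimpleGraph V) : ℕ :=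
  sInf {k : ℕ | ∃ f : Fin k → V × Set V,
    (∀ i, (f i).2.Nonempty ∧ (f i).1 ∉ (f i).2) ∧
    ∀ u v : V, G.Adj u v ↔
      ∃ i, (u = (f i).1 ∧ v ∈ (f i).2) ∨ (v = (f i).1 ∧ u ∈ (f i).2)}

end LGraph

/-- The largest number of maximal independent sets in a graph on `m` vertices (Moon–Moser):
`3^(m/3)`, `4·3^((m-4)/3)` or `2·3^((m-2)/3)` according as `m ≡ 0, 1, 2 (mod 3)`, for `m ≥ 2`. -/
def moonMoser : ℕ → ℕ
  | 0 => 1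
  | 1 => 1
  | 2 => 2
  | 3 => 3
  | 4 => 4
  | m + 5 => 3 * moonMoser (m + 2)

theorem moonMoser_add_three {m : ℕ} (hm : 2 ≤ m) : moonMoser (m + 3) = 3 * moonMoser m := by
  obtain ⟨k, rfl⟩ := Nat.exists_eq_add_of_le' hm
  rfl

theorem mul_moonMoser_le_of_le_four {j : ℕ} (hj : j ≤ 4) :
    ∀ a, j * moonMoser a ≤ moonMoser (a + j)
  | 0 | 1 | 2 | 3 | 4 => by interval_cases j <;> decide
  | a + 5 => by
    have ih := mul_moonMoser_le_of_le_four hj (a + 2)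
    rw [show a + 5 + j = a + 2 + j + 3 by omega, moonMoser_add_three (by omega),
      moonMoser_add_three (by omega), Nat.mul_left_comm]
    exact Nat.mul_le_mul_left 3 ih

theorem mul_moonMoser_le (j a : ℕ) : j * moonMoser a ≤ moonMoser (a + j) := by
  induction j using Nat.strong_induction_on with
  | _ j ih =>
    rcases Nat.lt_or_ge j 5 with hj | hj
    · exact mul_moonMoser_le_of_le_four (by omega) a
    obtain ⟨k, rfl⟩ : ∃ k, j = k + 3 := ⟨j - 3, by omega⟩
    calc (k + 3) * moonMoser a ≤ 3 * (k * moonMoser a) := by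
          rw [← Nat.mul_assoc]; exact Nat.mul_le_mul_right _ (by omega)
      _ ≤ 3 * moonMoser (a + k) := Nat.mul_le_mul_left 3 (ih k (by omega))
      _ ≤ moonMoser (a + (k + 3)) := mul_moonMoser_le_of_le_four (by omega) (a + k)

theorem moonMoser_mono : Monotone moonMoser :=
  monotone_nat_of_le_succ fun a => by simpa using mul_moonMoser_le 1 a

theorem moonMoser_three_mul : ∀ i, moonMoser (3 * i) = 3 ^ i
  | 0 => rfl
  | 1 => rfl
  | i + 2 => by
    rw [show 3 * (i + 2) = 3 * (i + 1) + 3 by ring, moonMoser_add_three (by omega),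
      moonMoser_three_mul (i + 1), pow_succ 3 (i + 1), Nat.mul_comm]

theorem moonMoser_three_mul_add_two : ∀ i, moonMoser (3 * i + 2) = 2 * 3 ^ i
  | 0 => rfl
  | i + 1 => by
    rw [show 3 * (i + 1) + 2 = 3 * i + 2 + 3 by ring, moonMoser_add_three (by omega),
      moonMoser_three_mul_add_two i, pow_succ]
    ring

theorem moonMoser_three_mul_add_four : ∀ i, moonMoser (3 * i + 4) = 4 * 3 ^ i
  | 0 => rfl
  | i + 1 => by
    rw [show 3 * (i + 1) + 4 = 3 * i + 4 + 3 by ring, moonMoser_add_three (by omega),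
      moonMoser_three_mul_add_four i, pow_succ]
    ring

theorem exists_prod_eq_moonMoser :
    ∀ m, ∃ (t : ℕ) (k : Fin t → ℕ), ∏ j, k j = moonMoser m ∧ ∑ j, k j ≤ m
  | 0 | 1 => ⟨0, Fin.elim0, rfl, Nat.zero_le _⟩
  | 2 => ⟨1, fun _ => 2, rfl, le_rfl⟩
  | 3 => ⟨1, fun _ => 3, rfl, le_rfl⟩
  | 4 => ⟨1, fun _ => 4, rfl, le_rfl⟩
  | m + 5 =>
    have ⟨t, k, hprod, hsum⟩ := exists_prod_eq_moonMoser (m + 2)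
    ⟨t + 1, Fin.cons 3 k, by rw [Fin.prod_cons, hprod]; rfl, by rw [Fin.sum_cons]; omega⟩

namespace SimpleGraph

open Finset

variable {α : Type*} (G : SimpleGraph α)

def IsMaximalIndepSetIn (V S : Finset α) : Prop :=
  Maximal (fun T : Finset α => T ⊆ V ∧ G.IsIndepSet (T : Set α)) S

def closedNbhdIn [DecidableEq α] [DecidableRel G.Adj] (V : Finset α) (v : α) : Finset α :=
  insert v (V.filter (G.Adj v))

variable {G}

theorem isIndepSet_insert {s : Set α} {a : α} :
    G.IsIndepSet (insert a s) ↔ G.IsIndepSet s ∧ ∀ b ∈ s, ¬ G.Adj a b := by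
  rw [IsIndepSet, Set.pairwise_insert]
  exact and_congr_right fun _ => forall₂_congr fun _ _ =>
    ⟨fun h hab => (h (G.ne_of_adj hab)).1 hab, fun h _ => ⟨h, fun hba => h hba.symm⟩⟩

section closedNbhdIn

variable [DecidableEq α] [DecidableRel G.Adj] {V : Finset α} {u v x : α}

theorem mem_closedNbhdIn : x ∈ G.closedNbhdIn V v ↔ x = v ∨ x ∈ V ∧ G.Adj v x := by
  simp [closedNbhdIn]

theorem self_mem_closedNbhdIn : v ∈ G.closedNbhdIn V v := mem_insert_self _ _

theorem closedNbhdIn_subset (hv : v ∈ V) : G.closedNbhdIn V v ⊆ V :=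
  insert_subset hv (filter_subset _ _)

theorem IsMaximalIndepSetIn.exists_mem_closedNbhdIn {S : Finset α}
    (hS : G.IsMaximalIndepSetIn V S) (hv : v ∈ V) : ∃ u ∈ G.closedNbhdIn V v, u ∈ S := by
  by_contra! hN
  have hins : insert v S ⊆ V ∧ G.IsIndepSet (insert v S : Finset α) := by
    refine ⟨insert_subset hv hS.1.1, ?_⟩
    rw [coe_insert, isIndepSet_insert]
    exact ⟨hS.1.2, fun b hb hvb => hN b (mem_closedNbhdIn.2 (Or.inr ⟨hS.1.1 hb, hvb⟩)) hb⟩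
  exact hN v self_mem_closedNbhdIn (hS.2 hins (subset_insert _ _) (mem_insert_self _ _))

theorem IsMaximalIndepSetIn.erase {S : Finset α} (hS : G.IsMaximalIndepSetIn V S) (hu : u ∈ S) :
    G.IsMaximalIndepSetIn (V \ G.closedNbhdIn V u) (S.erase u) := by
  have hSu : S.erase u ⊆ V \ G.closedNbhdIn V u := by
    intro x hx
    obtain ⟨hxu, hxS⟩ := mem_erase.1 hx
    refine mem_sdiff.2 ⟨hS.1.1 hxS, fun hxN => ?_⟩
    rcases mem_closedNbhdIn.1 hxN with rfl | ⟨-, hux⟩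
    · exact hxu rfl
    · exact hS.1.2 hu hxS hxu.symm hux
  refine ⟨⟨hSu, hS.1.2.mono (by simp)⟩, fun T ⟨hTV, hT⟩ hST x hxT => ?_⟩
  have hins : insert u T ⊆ V ∧ G.IsIndepSet (insert u T : Finset α) := by
    refine ⟨insert_subset (hS.1.1 hu) (hTV.trans sdiff_subset), ?_⟩
    rw [coe_insert, isIndepSet_insert]
    refine ⟨hT, fun b hb hub => ?_⟩
    obtain ⟨hbV, hbN⟩ := mem_sdiff.1 (hTV hb)
    exact hbN (mem_closedNbhdIn.2 (Or.inr ⟨hbV, hub⟩))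
  have hxu : x ≠ u := fun h => (mem_sdiff.1 (hTV hxT)).2 (h ▸ self_mem_closedNbhdIn)
  have hSins : S ⊆ insert u T := insert_erase hu ▸ insert_subset_insert u hST
  exact mem_erase.2 ⟨hxu, hS.2 hins hSins (mem_insert_of_mem hxT)⟩

end closedNbhdIn

theorem card_le_moonMoser (V : Finset α) {F : Finset (Finset α)}
    (hF : ∀ S ∈ F, G.IsMaximalIndepSetIn V S) : #F ≤ moonMoser #V := by
  classical
  induction V using Finset.strongInduction generalizing F with
  | H V ih =>
    rcases V.eq_empty_or_nonempty with rfl | hV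
    · refine card_le_one.2 fun S hS T hT => ?_
      rw [subset_empty.1 (hF S hS).1.1, subset_empty.1 (hF T hT).1.1]
    obtain ⟨v, hv, hmin⟩ := V.exists_min_image (fun x => #(G.closedNbhdIn V x)) hV
    set N := G.closedNbhdIn V v
    have hNV : #N ≤ #V := card_le_card (closedNbhdIn_subset hv)
    -- `S ↦ S.erase u` embeds the maximal independent sets through `u` into those of `V \ N[u]`,
    -- which is no larger than `V \ N[v]` by the choice of `v`.
    have hfiber : ∀ u ∈ N, #(F.filter (u ∈ ·)) ≤ moonMoser (#V - #N) := by
      intro u hu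
      have huV : u ∈ V := closedNbhdIn_subset hv hu
      have hsub : G.closedNbhdIn V u ⊆ V := closedNbhdIn_subset huV
      calc #(F.filter (u ∈ ·)) = #((F.filter (u ∈ ·)).image (·.erase u)) :=
            (card_image_of_injOn fun S hS T hT => erase_injOn' u (mem_filter.1 hS).2
              (mem_filter.1 hT).2).symm
        _ ≤ moonMoser #(V \ G.closedNbhdIn V u) := by
            refine ih _ (sdiff_ssubset hsub ⟨u, self_mem_closedNbhdIn⟩) ?_
            simp only [mem_image, mem_filter]
            rintro _ ⟨S, ⟨hS, huS⟩, rfl⟩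
            exact (hF S hS).erase huS
        _ ≤ moonMoser (#V - #N) := by
            rw [card_sdiff_of_subset hsub]
            exact moonMoser_mono (Nat.sub_le_sub_left (hmin u huV) _)
    calc #F ≤ #(N.biUnion fun u => F.filter (u ∈ ·)) := by
          refine card_le_card fun S hS => mem_biUnion.2 ?_
          obtain ⟨u, hu, huS⟩ := (hF S hS).exists_mem_closedNbhdIn hv
          exact ⟨u, hu, mem_filter.2 ⟨hS, huS⟩⟩
      _ ≤ ∑ u ∈ N, #(F.filter (u ∈ ·)) := card_biUnion_le
      _ ≤ #N * moonMoser (#V - #N) := by simpa using sum_le_sum hfiber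
      _ ≤ moonMoser #V := by simpa [Nat.sub_add_cancel hNV] using mul_moonMoser_le #N (#V - #N)

theorem card_le_moonMoser_of_pairwise_exists_adj (V : Finset α) {F : Finset (Finset α)}
    (hF : ∀ S ∈ F, S ⊆ V ∧ G.IsIndepSet (S : Set α))
    (hadj : (F : Set (Finset α)).Pairwise fun S T => ∃ a ∈ S, ∃ b ∈ T, G.Adj a b) :
    #F ≤ moonMoser #V := by
  classical
  have hext : ∀ S ∈ F, ∃ T, S ⊆ T ∧ G.IsMaximalIndepSetIn V T := by
    intro S hS
    have hmem : S ∈ V.powerset.filter fun T : Finset α => G.IsIndepSet (T : Set α) := by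
      simpa using hF S hS
    obtain ⟨T, hST, hT⟩ := exists_le_maximal _ hmem
    refine ⟨T, hST, ?_⟩
    simpa [IsMaximalIndepSetIn] using hT
  choose! g hSg hg using hext
  have hinj : Set.InjOn g F := by
    intro S hS T hT hST
    by_contra hne
    obtain ⟨a, ha, b, hb, hab⟩ := hadj hS hT hne
    exact (hg S hS).1.2 (hSg S hS ha) (hST ▸ hSg T hT hb) (G.ne_of_adj hab) hab
  rw [← card_image_of_injOn hinj]
  exact card_le_moonMoser V (by simpa using hg)

end SimpleGraph

namespace LGraph

variable {V : Type*}

theorem st_le_coverOrder {G : LGraph V} {𝒞 : Set (Sym2 (Set V))} (h : G.IsSetJoinCover 𝒞) :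
    G.st ≤ coverOrder 𝒞 :=
  Nat.sInf_le ⟨𝒞, h, rfl⟩

theorem exists_isOptimalCover {G : LGraph V} {𝒞 : Set (Sym2 (Set V))} (h : G.IsSetJoinCover 𝒞) :
    ∃ 𝒟, G.IsOptimalCover 𝒟 :=
  Nat.sInf_mem (s := {k | ∃ 𝒟, G.IsSetJoinCover 𝒟 ∧ coverOrder 𝒟 = k}) ⟨_, 𝒞, h, rfl⟩

def coordinateCover {ι : Type*} {β : ι → Type*} (c : V → ∀ j, β j) : Set (Sym2 (Set V)) :=
  {p | ∃ j u v, c u j ≠ c v j ∧ p = s({w | c w j = c u j}, {w | c w j = c v j})}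

theorem isSetJoinCover_coordinateCover {n : ℕ} {ι : Type*} {β : ι → Type*}
    {c : Fin n → ∀ j, β j} (hc : Function.Injective c) :
    (completeGraph n).IsSetJoinCover (coordinateCover c) := by
  refine ⟨?_, fun u v => ⟨fun huv => ?_, ?_⟩⟩
  · rintro _ ⟨j, u, v, -, rfl⟩ K hK
    rcases Sym2.mem_iff.1 hK with rfl | rfl
    exacts [⟨u, rfl⟩, ⟨v, rfl⟩]
  · obtain ⟨j, hj⟩ := Function.ne_iff.1 (hc.ne huv)
    exact ⟨_, ⟨j, u, v, hj, rfl⟩, _, _, rfl, rfl, rfl⟩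
  · rintro ⟨_, ⟨j, u', v', hj, rfl⟩, K, L, hKL, hu, hv⟩ rfl
    rcases Sym2.eq_iff.1 hKL with ⟨rfl, rfl⟩ | ⟨rfl, rfl⟩
    exacts [hj ((hu : _ = _).symm.trans hv), hj ((hv : _ = _).symm.trans hu)]

theorem coverOrder_coordinateCover_le {ι : Type*} [Fintype ι] {β : ι → Type*}
    [∀ j, Fintype (β j)] (c : V → ∀ j, β j) :
    coverOrder (coordinateCover c) ≤ ∑ j, Fintype.card (β j) := by
  let fibre : (Σ j, β j) → Set V := fun x => {w | c w x.1 = x.2}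
  have hsub : comps (coordinateCover c) ⊆ fibre '' Set.univ := by
    rintro K ⟨_, ⟨j, u, v, -, rfl⟩, hK⟩
    rcases Sym2.mem_iff.1 hK with rfl | rfl
    exacts [⟨⟨j, c u j⟩, trivial, rfl⟩, ⟨⟨j, c v j⟩, trivial, rfl⟩]
  calc coverOrder (coordinateCover c) ≤ (fibre '' Set.univ).ncard :=
        Set.ncard_le_ncard hsub (Set.toFinite _)
    _ ≤ (Set.univ : Set (Σ j, β j)).ncard := Set.ncard_image_le Set.finite_univ
    _ = ∑ j, Fintype.card (β j) := by simp [Set.ncard_univ, Nat.card_eq_fintype_card]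

theorem st_completeGraph_le_sum {n : ℕ} {ι : Type*} [Fintype ι] (k : ι → ℕ)
    (hn : n ≤ ∏ j, k j) : (completeGraph n).st ≤ ∑ j, k j := by
  classical
  obtain ⟨c⟩ : Nonempty (Fin n ↪ ∀ j, Fin (k j)) :=
    Function.Embedding.nonempty_of_card_le (by simpa using hn)
  simpa using (st_le_coverOrder (isSetJoinCover_coordinateCover c.injective)).trans
    (coverOrder_coordinateCover_le c)

open Finset in
theorem le_moonMoser_coverOrder {n : ℕ} {𝒞 : Set (Sym2 (Set (Fin n)))}
    (h : (completeGraph n).IsSetJoinCover 𝒞) : n ≤ moonMoser (coverOrder 𝒞) := by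
  classical
  let H : SimpleGraph (Set (Fin n)) := SimpleGraph.fromRel fun K L => s(K, L) ∈ 𝒞
  let S : Fin n → Finset (Set (Fin n)) := fun v => (comps 𝒞).toFinset.filter (v ∈ ·)
  have hloop : ∀ v K L, s(K, L) ∈ 𝒞 → v ∈ K → v ∈ L → False :=
    fun v K L hKL hK hL => (h.2 v v).2 ⟨_, hKL, K, L, rfl, hK, hL⟩ rfl
  have hindep : ∀ v, H.IsIndepSet (S v : Set (Set (Fin n))) := by
    rintro v K hK L hL - ⟨-, hKL | hLK⟩
    · exact hloop v K L hKL (mem_filter.1 hK).2 (mem_filter.1 hL).2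
    · exact hloop v L K hLK (mem_filter.1 hL).2 (mem_filter.1 hK).2
  have hcross : ∀ u v, u ≠ v → ∃ K ∈ S u, ∃ L ∈ S v, H.Adj K L := by
    intro u v huv
    obtain ⟨_, hp, K, L, rfl, hu, hv⟩ := (h.2 u v).1 huv
    have hKL : K ≠ L := by rintro rfl; exact hloop u K K hp hu hu
    exact ⟨K, by simpa [S] using ⟨⟨_, hp, Sym2.mem_mk_left _ _⟩, hu⟩,
      L, by simpa [S] using ⟨⟨_, hp, Sym2.mem_mk_right _ _⟩, hv⟩, hKL, Or.inl hp⟩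
  have hS : Function.Injective S := by
    intro u v huv
    by_contra hne
    obtain ⟨K, hK, L, hL, hKL⟩ := hcross u v hne
    exact hindep u hK (huv ▸ hL) hKL.ne hKL
  calc n = #(univ.image S) := by rw [card_image_of_injective _ hS, card_univ, Fintype.card_fin]
    _ ≤ moonMoser #(comps 𝒞).toFinset := by
        refine H.card_le_moonMoser_of_pairwise_exists_adj _ ?_ ?_
        · simp only [mem_image, mem_univ, true_and, forall_exists_index, forall_apply_eq_imp_iff]
          exact fun v => ⟨filter_subset _ _, hindep v⟩
        · simp only [coe_image, coe_univ, Set.image_univ]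
          rintro _ ⟨u, rfl⟩ _ ⟨v, rfl⟩ huv
          exact hcross u v fun h => huv (h ▸ rfl)
    _ = moonMoser (coverOrder 𝒞) := by rw [coverOrder, Set.ncard_eq_toFinset_card']

theorem st_completeGraph_le_iff {n m : ℕ} : (completeGraph n).st ≤ m ↔ n ≤ moonMoser m := by
  refine ⟨fun hm => ?_, fun hn => ?_⟩
  · obtain ⟨𝒞, hc, hord⟩ := exists_isOptimalCover
      (isSetJoinCover_coordinateCover (c := fun v (_ : Unit) => v) fun u v h => congr_fun h ())
    exact (le_moonMoser_coverOrder hc).trans (moonMoser_mono (hord ▸ hm))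
  · obtain ⟨t, k, hprod, hsum⟩ := exists_prod_eq_moonMoser m
    exact (st_completeGraph_le_sum k (hprod ▸ hn)).trans hsum

theorem st_completeGraph_eq_succ {n m : ℕ} (hlt : moonMoser m < n) (hle : n ≤ moonMoser (m + 1)) :
    (completeGraph n).st = m + 1 :=
  le_antisymm (st_completeGraph_le_iff.2 hle)
    (Nat.lt_of_not_le fun h => (st_completeGraph_le_iff.1 h).not_gt hlt)

/-- The bounds involving `3^{i−1}` are multiplied through by `3` to avoid natural subtraction. -/
theorem st_completeGraph_general (n i : ℕ) :
    (2 * 3 ^ i < 3 * n ∧ n ≤ 3 ^ i → (completeGraph n).st = 3 * i) ∧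
    (3 ^ i < n ∧ 3 * n ≤ 4 * 3 ^ i → (completeGraph n).st = 3 * i + 1) ∧
    (4 * 3 ^ i < 3 * n ∧ n ≤ 2 * 3 ^ i → (completeGraph n).st = 3 * i + 2) := by
  have h3 := moonMoser_three_mul
  have h2 := moonMoser_three_mul_add_two
  have h4 := moonMoser_three_mul_add_four
  refine ⟨fun ⟨hlo, hhi⟩ => ?_, fun ⟨hlo, hhi⟩ => ?_, fun ⟨hlo, hhi⟩ => ?_⟩
  · rcases i with _ | i
    · exact Nat.le_zero.1 (st_completeGraph_le_iff.2 (by simpa [moonMoser] using hhi))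
    · refine st_completeGraph_eq_succ (m := 3 * i + 2) ?_ ?_
      · rw [h2]; rw [pow_succ] at hlo; omega
      · rwa [show 3 * i + 2 + 1 = 3 * (i + 1) by ring, h3]
  · rcases i with _ | i
    · omega
    · refine st_completeGraph_eq_succ ?_ ?_
      · rwa [h3]
      · rw [show 3 * (i + 1) + 1 = 3 * i + 4 by ring, h4]; rw [pow_succ] at hhi; omega
  · refine st_completeGraph_eq_succ ?_ (by rwa [h2])
    rcases i with _ | i
    · change 1 < n; omega
    · rw [show 3 * (i + 1) + 1 = 3 * i + 4 by ring, h4]; rw [pow_succ] at hlo; omega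

/-- For the complete loopless graph `Kₙ` (`n ≥ 2`):
`st₊(Kₙ) = 3i` if `2·3^{i−1} < n ≤ 3^i`, `st₊(Kₙ) = 3i + 1` if `3^i < n ≤ 4·3^{i−1}`,
and `st₊(Kₙ) = 3i + 2` if `4·3^{i−1} < n ≤ 2·3^i`.  (The inequalities involving
`3^{i−1}` are written multiplied through by `3` to avoid natural subtraction.) -/
theorem st_completeGraph (n i : ℕ) (hn : 2 ≤ n) :
    (2 * 3 ^ i < 3 * n ∧ n ≤ 3 ^ i → (completeGraph n).st = 3 * i) ∧
    (3 ^ i < n ∧ 3 * n ≤ 4 * 3 ^ i → (completeGraph n).st = 3 * i + 1) ∧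
    (4 * 3 ^ i < 3 * n ∧ n ≤ 2 * 3 ^ i → (completeGraph n).st = 3 * i + 2) :=
  st_completeGraph_general n i

end LGraph
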